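/- Let Ĵ and J̃ be empirical risks built from samples X = (X₁,...,Xₙ) and X' = (Y, X₂,...,Xₙ) respectively, with the same regularizer R. If φ̂ minimizes Ĵ and φ̃ minimizes J̃ and the quadruple inequality l(φ,x) − l(ψ,x) − l(φ,y) + l(ψ,y) ≤ a(x,y)·ϑ(φ,ψ)^α holds, and Ĵ satisfies the error bound (τ/2)·ϑ(φ̃, Ŝ)^β ≤ Ĵ(φ̃) − Ĵ_*, then ϑ(φ̃, Ŝ)^{β−α} ≤ (2/(τn))·a(X₁, Y). -/

import Mathlib

/-!
Replacing one sample changes the empirical risk by `(l φ X₁ - l φ Y) / n`. Hence for every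
minimiser `ψ` of `Ĵ`, the optimality of `φ̃` for `J̃` gives
`Ĵ φ̃ - Ĵ_* ≤ (l φ̃ X₁ - l ψ X₁ - l φ̃ Y + l ψ Y) / n ≤ a(X₁, Y) ϑ(φ̃, ψ)^α / n`.
Letting `ϑ(φ̃, ψ)` decrease to `ϑ(φ̃, Ŝ)` and combining with the error bound
`(τ/2) ϑ(φ̃, Ŝ)^β ≤ Ĵ φ̃ - Ĵ_*` leaves `(τ/2) ϑ^β ≤ a(X₁, Y) ϑ^α / n`; divide by `ϑ^α`.
-/

open Metric Filter Topology

theorem Finset.sum_comp_update_eq {ι 𝕏 G : Type*} [Fintype ι] [DecidableEq ι] [AddCommGroup G]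
    (f : 𝕏 → G) (x : ι → 𝕏) (i : ι) (y : 𝕏) :
    ∑ j, f (Function.update x i y j) = ∑ j, f (x j) - f (x i) + f y := by
  simp_rw [← Function.comp_apply (f := f), Function.comp_update,
    Finset.sum_update_of_mem (Finset.mem_univ i),
    Finset.sum_eq_add_sum_sdiff_singleton_of_mem (Finset.mem_univ i) (f ∘ x)]
  abel

theorem Metric.le_mul_infDist_rpow {M : Type*} [PseudoMetricSpace M] {S : Set M} {φ : M}
    (hS : S.Nonempty) {c K α : ℝ} (hK : 0 ≤ K) (hα : 0 ≤ α)
    (h : ∀ ψ ∈ S, c ≤ K * dist φ ψ ^ α) : c ≤ K * infDist φ S ^ α := by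
  have hcont : ContinuousAt (fun ε : ℝ => K * (infDist φ S + ε) ^ α) 0 :=
    continuousAt_const.mul ((continuousAt_const.add continuousAt_id).rpow_const (Or.inr hα))
  have hlim : Tendsto (fun ε : ℝ => K * (infDist φ S + ε) ^ α) (𝓝[>] 0)
      (𝓝 (K * infDist φ S ^ α)) := by
    simpa using hcont.tendsto.mono_left nhdsWithin_le_nhds
  refine ge_of_tendsto hlim ?_
  filter_upwards [self_mem_nhdsWithin] with ε (hε : 0 < ε)
  obtain ⟨ψ, hψ, hdist⟩ := (infDist_lt_iff hS).mp (lt_add_of_pos_right _ hε)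
  exact (h ψ hψ).trans (by gcongr)

theorem Real.rpow_sub_le_div_of_mul_rpow_le {d c K α β : ℝ} (hd : 0 ≤ d) (hαβ : α < β)
    (hc : 0 < c) (hK : 0 ≤ K) (h : c * d ^ β ≤ K * d ^ α) : d ^ (β - α) ≤ K / c := by
  rcases hd.eq_or_lt with rfl | hd
  · rw [Real.zero_rpow (sub_ne_zero.mpr hαβ.ne')]
    positivity
  · rw [Real.rpow_sub hd, div_le_div_iff₀ (by positivity) hc]
    linarith

theorem stmt_16 {M 𝕏 : Type*} [MetricSpace M]
    (l : M → 𝕏 → ℝ) (R : M → ℝ) (n : ℕ) (hn : 0 < n)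
    (x : Fin n → 𝕏) (y : 𝕏)
    (α β τ : ℝ) (hα : 0 < α) (hαβ : α < β) (hτ : 0 < τ)
    (a : 𝕏 → 𝕏 → ℝ) (hanneg : ∀ w z, 0 ≤ a w z)
    (Jhat : M → ℝ) (hJhat : Jhat = fun φ => ((1 : ℝ) / n) * ∑ i, l φ (x i) + R φ)
    (Jtil : M → ℝ)
    (hJtil : Jtil = fun φ => ((1 : ℝ) / n) * ∑ i, l φ (Function.update x ⟨0, hn⟩ y i) + R φ)
    (Shat : Set M) (hShat : Shat = {φ | ∀ ψ, Jhat φ ≤ Jhat ψ})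
    (φhat : M) (hφhat : φhat ∈ Shat)
    (φtil : M) (hφtil : ∀ ψ, Jtil φtil ≤ Jtil ψ)
    (hquad : ∀ φ ψ : M, ∀ w z : 𝕏,
      l φ w - l ψ w - l φ z + l ψ z ≤ a w z * dist φ ψ ^ α)
    (herr : τ / 2 * infDist φtil Shat ^ β ≤ Jhat φtil - Jhat φhat) :
    infDist φtil Shat ^ (β - α) ≤ (2 / (τ * n)) * a (x ⟨0, hn⟩) y := by
  set x₁ := x ⟨0, hn⟩
  have hn' : (0 : ℝ) < n := Nat.cast_pos.mpr hn
  have hgap : ∀ φ, Jhat φ - Jtil φ = (l φ x₁ - l φ y) / n := fun φ => by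
    simp only [hJhat, hJtil, Finset.sum_comp_update_eq]
    ring
  have hnear : ∀ ψ ∈ Shat, τ / 2 * infDist φtil Shat ^ β ≤ a x₁ y / n * dist φtil ψ ^ α := by
    intro ψ hψ
    rw [hShat] at hψ
    calc τ / 2 * infDist φtil Shat ^ β ≤ Jhat φtil - Jhat ψ := by linarith [hψ φhat]
      _ = Jtil φtil - Jtil ψ + (l φtil x₁ - l ψ x₁ - l φtil y + l ψ y) / n := by
        linear_combination hgap φtil - hgap ψ
      _ ≤ (l φtil x₁ - l ψ x₁ - l φtil y + l ψ y) / n := by linarith [hφtil ψ]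
      _ ≤ a x₁ y * dist φtil ψ ^ α / n := by gcongr; exact hquad φtil ψ x₁ y
      _ = a x₁ y / n * dist φtil ψ ^ α := by ring
  have hbound := le_mul_infDist_rpow ⟨φhat, hφhat⟩ (by positivity [hanneg x₁ y]) hα.le hnear
  calc infDist φtil Shat ^ (β - α) ≤ a x₁ y / n / (τ / 2) :=
        Real.rpow_sub_le_div_of_mul_rpow_le infDist_nonneg hαβ (by positivity)
          (div_nonneg (hanneg x₁ y) hn'.le) hbound
    _ = 2 / (τ * n) * a x₁ y := by field_simp
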